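/- Main theorem (third-type boundaries are necessary and sufficient): let c be a classical solution of the convection–dispersion equation on [0, ℓ] and let c_in, c_eff : ℝ → ℝ. Then the following are equivalent: (a) the mass balance holds on every sub-column, i.e. for all 0 ≤ a ≤ b ≤ ℓ and every t, d/dt ∫ₐᵇ c(t,x) dx = F(t,a) − F(t,b) + ∫ₐᵇ r(t,x) dx, where F(t,x) = v·c(t,x) − D·∂x c(t,x) for 0 < x < ℓ, F(t,0) = v·c_in(t), and F(t,ℓ) = v·c_eff(t); (b) the third-type entrance condition v·c_in(t) = v·c(t,0) − D·∂x c(t,0) and the third-type exit condition v·c_eff(t) = v·c(t,ℓ) − D·∂x c(t,ℓ) hold for all t. -/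

import Mathlib

open Set

/-- `c` is a classical solution of the convection–dispersion equation
`∂t c = D·∂xx c − v·∂x c + r` on the column `[0, ℓ]`, where `ct`, `cx`, `cxx`
denote the partial derivatives `∂t c`, `∂x c`, `∂xx c` (one-sided in the
space variable at the endpoints), and these together with `r` are continuous
on `ℝ × [0, ℓ]`. -/
structure IsCDESolution (D v ℓ : ℝ) (c ct cx cxx r : ℝ → ℝ → ℝ) : Prop where
  hasDeriv_x : ∀ t : ℝ, ∀ x ∈ Icc (0:ℝ) ℓ, HasDerivWithinAt (c t) (cx t x) (Icc 0 ℓ) x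
  hasDeriv_xx : ∀ t : ℝ, ∀ x ∈ Icc (0:ℝ) ℓ, HasDerivWithinAt (cx t) (cxx t x) (Icc 0 ℓ) x
  hasDeriv_t : ∀ x ∈ Icc (0:ℝ) ℓ, ∀ t : ℝ, HasDerivAt (fun s => c s x) (ct t x) t
  cont_ct : ContinuousOn (Function.uncurry ct) (univ ×ˢ Icc 0 ℓ)
  cont_cx : ContinuousOn (Function.uncurry cx) (univ ×ˢ Icc 0 ℓ)
  cont_cxx : ContinuousOn (Function.uncurry cxx) (univ ×ˢ Icc 0 ℓ)
  cont_r : ContinuousOn (Function.uncurry r) (univ ×ˢ Icc 0 ℓ)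
  pde : ∀ t : ℝ, ∀ x ∈ Icc (0:ℝ) ℓ, ct t x = D * cxx t x - v * cx t x + r t x

/-- The flux function entering the sub-column mass balances: the total
(convective plus dispersive) flux `v·c − D·∂x c` in the interior, the
influent flux `v·c_in` at `x = 0` and the effluent flux `v·c_eff` at
`x = ℓ`. -/
noncomputable def bdryFlux (D v ℓ : ℝ) (c cx : ℝ → ℝ → ℝ) (cin ceff : ℝ → ℝ)
    (t x : ℝ) : ℝ :=
  if x = 0 then v * cin t
  else if x = ℓ then v * ceff t
  else v * c t x - D * cx t x

open MeasureTheory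

/-!
Integrating the equation over `[a, b]` and applying the fundamental theorem of calculus to `c`
and `∂x c` shows that every classical solution satisfies the mass balance with the interior flux
`v·c − D·∂x c` evaluated at both ends. Hence the balance with `bdryFlux` holds on every
sub-column exactly when `bdryFlux` agrees with `v·c − D·∂x c` at `0` and at `ℓ`; the two
conditions are read off from the sub-columns `[0, ℓ/2]` and `[ℓ/2, ℓ]` by uniqueness of the
derivative.
-/

theorem intervalIntegral.integral_eq_sub_of_hasDerivWithinAt_Icc {E : Type*}
    [NormedAddCommGroup E] [NormedSpace ℝ E] [CompleteSpace E] {f f' : ℝ → E} {a b : ℝ}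
    (hab : a ≤ b) (hderiv : ∀ x ∈ Icc a b, HasDerivWithinAt f (f' x) (Icc a b) x)
    (hint : IntervalIntegrable f' volume a b) :
    ∫ x in a..b, f' x = f b - f a :=
  integral_eq_sub_of_hasDerivAt_of_le hab (fun x hx => (hderiv x hx).continuousWithinAt)
    (fun x hx => (hderiv x (Ioo_subset_Icc_self hx)).hasDerivAt (Icc_mem_nhds hx.1 hx.2)) hint

theorem intervalIntegral.hasDerivAt_integral_of_continuousOn_uncurry {E : Type*}
    [NormedAddCommGroup E] [NormedSpace ℝ E] {F F' : ℝ → ℝ → E} {a b : ℝ}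
    (hF : ∀ s, ContinuousOn (F s) (uIcc a b))
    (hF' : ContinuousOn (Function.uncurry F') (univ ×ˢ uIcc a b))
    (hderiv : ∀ x ∈ uIcc a b, ∀ s, HasDerivAt (fun s => F s x) (F' s x) s) (t : ℝ) :
    HasDerivAt (fun s => ∫ x in a..b, F s x) (∫ x in a..b, F' t x) t := by
  obtain ⟨M, hM⟩ := (isCompact_closedBall t 1).prod isCompact_uIcc
    |>.exists_bound_of_continuousOn (hF'.mono (prod_mono (subset_univ _) subset_rfl))
  have hsub : uIoc a b ⊆ uIcc a b := uIoc_subset_uIcc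
  refine (hasDerivAt_integral_of_dominated_loc_of_deriv_le (bound := fun _ => M)
    (Metric.closedBall_mem_nhds t one_pos)
    (.of_forall fun s => ((hF s).mono hsub).aestronglyMeasurable measurableSet_uIoc)
    ((hF t).intervalIntegrable)
    (((hF'.uncurry_left t (mem_univ t)).mono hsub).aestronglyMeasurable measurableSet_uIoc)
    (.of_forall fun x hx s hs => hM (s, x) ⟨hs, hsub hx⟩) intervalIntegrable_const
    (.of_forall fun x hx s _ => hderiv x (hsub hx) s)).2

theorem ContinuousOn.intervalIntegrable_uncurry_left {E : Type*} [NormedAddCommGroup E]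
    {f : ℝ → ℝ → E} {s : Set ℝ} {a b : ℝ}
    (hf : ContinuousOn (Function.uncurry f) (univ ×ˢ s)) (hs : uIcc a b ⊆ s) (t : ℝ) : IntervalIntegrable (f t) volume a b :=
  ((hf.uncurry_left t (mem_univ t)).mono hs).intervalIntegrable

namespace IsCDESolution

variable {D v ℓ : ℝ} {c ct cx cxx r : ℝ → ℝ → ℝ} {a b : ℝ}

theorem integral_cx (hsol : IsCDESolution D v ℓ c ct cx cxx r)
    (ha : 0 ≤ a) (hab : a ≤ b) (hb : b ≤ ℓ) (t : ℝ) :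
    ∫ x in a..b, cx t x = c t b - c t a := by
  have hsub := Icc_subset_Icc ha hb
  exact intervalIntegral.integral_eq_sub_of_hasDerivWithinAt_Icc hab
    (fun x hx => (hsol.hasDeriv_x t x (hsub hx)).mono hsub)
    (hsol.cont_cx.intervalIntegrable_uncurry_left (by rwa [uIcc_of_le hab]) t)

theorem integral_cxx (hsol : IsCDESolution D v ℓ c ct cx cxx r)
    (ha : 0 ≤ a) (hab : a ≤ b) (hb : b ≤ ℓ) (t : ℝ) :
    ∫ x in a..b, cxx t x = cx t b - cx t a := by
  have hsub := Icc_subset_Icc ha hb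
  exact intervalIntegral.integral_eq_sub_of_hasDerivWithinAt_Icc hab
    (fun x hx => (hsol.hasDeriv_xx t x (hsub hx)).mono hsub)
    (hsol.cont_cxx.intervalIntegrable_uncurry_left (by rwa [uIcc_of_le hab]) t)

theorem integral_ct (hsol : IsCDESolution D v ℓ c ct cx cxx r)
    (ha : 0 ≤ a) (hab : a ≤ b) (hb : b ≤ ℓ) (t : ℝ) :
    ∫ x in a..b, ct t x
      = (v * c t a - D * cx t a) - (v * c t b - D * cx t b) + ∫ x in a..b, r t x := by
  have hsub : uIcc a b ⊆ Icc 0 ℓ := by rw [uIcc_of_le hab]; exact Icc_subset_Icc ha hb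
  have hcxx := (hsol.cont_cxx.intervalIntegrable_uncurry_left hsub t).const_mul D
  have hcx := (hsol.cont_cx.intervalIntegrable_uncurry_left hsub t).const_mul v
  have hr := hsol.cont_r.intervalIntegrable_uncurry_left hsub t
  calc ∫ x in a..b, ct t x = ∫ x in a..b, (D * cxx t x - v * cx t x + r t x) :=
        intervalIntegral.integral_congr fun x hx => hsol.pde t x (hsub hx)
    _ = D * (∫ x in a..b, cxx t x) - v * (∫ x in a..b, cx t x) + ∫ x in a..b, r t x := by
        rw [intervalIntegral.integral_add (hcxx.sub hcx) hr,
          intervalIntegral.integral_sub hcxx hcx, intervalIntegral.integral_const_mul,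
          intervalIntegral.integral_const_mul]
    _ = _ := by rw [hsol.integral_cx ha hab hb, hsol.integral_cxx ha hab hb]; ring

theorem hasDerivAt_integral (hsol : IsCDESolution D v ℓ c ct cx cxx r)
    (ha : 0 ≤ a) (hab : a ≤ b) (hb : b ≤ ℓ) (t : ℝ) :
    HasDerivAt (fun s => ∫ x in a..b, c s x)
      ((v * c t a - D * cx t a) - (v * c t b - D * cx t b) + ∫ x in a..b, r t x) t := by
  have hsub : uIcc a b ⊆ Icc 0 ℓ := by rw [uIcc_of_le hab]; exact Icc_subset_Icc ha hb
  rw [← hsol.integral_ct ha hab hb]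
  exact intervalIntegral.hasDerivAt_integral_of_continuousOn_uncurry
    (fun s x hx => (hsol.hasDeriv_x s x (hsub hx)).continuousWithinAt.mono hsub)
    (hsol.cont_ct.mono (prod_mono subset_rfl hsub))
    (fun x hx => hsol.hasDeriv_t x (hsub hx)) t

end IsCDESolution

section bdryFlux

variable {D v ℓ : ℝ} {c cx : ℝ → ℝ → ℝ} {cin ceff : ℝ → ℝ} {t : ℝ}

theorem bdryFlux_zero : bdryFlux D v ℓ c cx cin ceff t 0 = v * cin t := if_pos rfl

theorem bdryFlux_self (hℓ : ℓ ≠ 0) : bdryFlux D v ℓ c cx cin ceff t ℓ = v * ceff t := by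
  simp [bdryFlux, hℓ]

theorem bdryFlux_of_ne {x : ℝ} (h0 : x ≠ 0) (hℓ : x ≠ ℓ) :
    bdryFlux D v ℓ c cx cin ceff t x = v * c t x - D * cx t x := by
  simp [bdryFlux, h0, hℓ]

theorem bdryFlux_of_third_type (hin : v * cin t = v * c t 0 - D * cx t 0)
    (hout : v * ceff t = v * c t ℓ - D * cx t ℓ) (x : ℝ) :
    bdryFlux D v ℓ c cx cin ceff t x = v * c t x - D * cx t x := by
  unfold bdryFlux
  split_ifs with h0 hℓ
  · exact h0 ▸ hin
  · exact hℓ ▸ hout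
  · rfl

end bdryFlux

theorem cde_third_type_boundaries_necessary_and_sufficient_general
    (D v ℓ : ℝ) (hℓ : 0 < ℓ)
    (c ct cx cxx r : ℝ → ℝ → ℝ) (cin ceff : ℝ → ℝ)
    (hsol : IsCDESolution D v ℓ c ct cx cxx r) :
    (∀ a b : ℝ, 0 ≤ a → a ≤ b → b ≤ ℓ → ∀ t : ℝ,
        HasDerivAt (fun s : ℝ => ∫ x in a..b, c s x)
          (bdryFlux D v ℓ c cx cin ceff t a - bdryFlux D v ℓ c cx cin ceff t b
            + ∫ x in a..b, r t x) t)
      ↔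
    (∀ t : ℝ, v * cin t = v * c t 0 - D * cx t 0
        ∧ v * ceff t = v * c t ℓ - D * cx t ℓ) := by
  refine ⟨fun h t => ⟨?_, ?_⟩, fun h a b ha hab hb t => ?_⟩
  · have hbal := (h 0 (ℓ / 2) le_rfl (by positivity) (by linarith) t).unique
      (hsol.hasDerivAt_integral le_rfl (by positivity) (by linarith) t)
    rw [bdryFlux_zero, bdryFlux_of_ne (by positivity) (by linarith)] at hbal
    linarith
  · have hbal := (h (ℓ / 2) ℓ (by positivity) (by linarith) le_rfl t).unique
      (hsol.hasDerivAt_integral (by positivity) (by linarith) le_rfl t)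
    rw [bdryFlux_self hℓ.ne', bdryFlux_of_ne (by positivity) (by linarith)] at hbal
    linarith
  · simp only [bdryFlux_of_third_type (h t).1 (h t).2]
    exact hsol.hasDerivAt_integral ha hab hb t

/-- Main theorem: third-type boundaries are a necessary and sufficient
condition of the conservation law.  For a classical solution of the CDE on
`[0, ℓ]`, the mass balance holds on every sub-column `[a, b] ⊆ [0, ℓ]` with
the flux `F = bdryFlux` if and only if both the third-type entrance
condition `v·c_in(t) = v·c(t,0) − D·∂x c(t,0)` and the third-type exit
condition `v·c_eff(t) = v·c(t,ℓ) − D·∂x c(t,ℓ)` hold for all `t`. -/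
theorem cde_third_type_boundaries_necessary_and_sufficient
    (D v ℓ : ℝ) (hD : 0 < D) (hv : 0 < v) (hℓ : 0 < ℓ)
    (c ct cx cxx r : ℝ → ℝ → ℝ) (cin ceff : ℝ → ℝ)
    (hsol : IsCDESolution D v ℓ c ct cx cxx r) :
    (∀ a b : ℝ, 0 ≤ a → a ≤ b → b ≤ ℓ → ∀ t : ℝ,
        HasDerivAt (fun s : ℝ => ∫ x in a..b, c s x)
          (bdryFlux D v ℓ c cx cin ceff t a - bdryFlux D v ℓ c cx cin ceff t b
            + ∫ x in a..b, r t x) t)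
      ↔
    (∀ t : ℝ, v * cin t = v * c t 0 - D * cx t 0
        ∧ v * ceff t = v * c t ℓ - D * cx t ℓ) :=
  cde_third_type_boundaries_necessary_and_sufficient_general D v ℓ hℓ c ct cx cxx r cin ceff hsol
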